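/- arXiv:2005.04478 — 5 statements merged into one kernel-verified Lean document; each statement's English description precedes it below -/
import Mathlib

section
/- Assume R is not small. Then the rank of Γ is at most ⌊#R/2⌋ + 1. -/
/-!
The map `α ↦ q / α` is an involution of `R` whose fixed points are the square roots of `q`.
Since `q / α` lies in the group generated by `q` and `α`, the group `Γ` is generated by `q`
together with one element of each orbit, and there are `(#R + #fixed points) / 2` orbits.
If `R` is not small it has at most one fixed point `γ`; when it has one, `q = γ²` is not
needed as an extra generator. Hence `Γ` has at most `⌊#R/2⌋ + 1` generators, and their
images span `ℚ ⊗ Γ`.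
-/

open Finset TensorProduct

universe u

theorem Finset.exists_subset_involution_transversal {α : Type*} [DecidableEq α] (σ : α → α)
    (S : Finset α) (hmaps : ∀ a ∈ S, σ a ∈ S) (hinv : ∀ a ∈ S, σ (σ a) = a) :
    ∃ T ⊆ S, (∀ a ∈ S, a ∈ T ∨ σ a ∈ T) ∧ 2 * #T ≤ #S + #{a ∈ S | σ a = a} := by
  induction S using Finset.strongInduction with
  | H S ih =>
  rcases S.eq_empty_or_nonempty with rfl | ⟨a, ha⟩
  · exact ⟨∅, by simp⟩
  set P : Finset α := {a, σ a}
  have hPS : P ⊆ S := by simp [P, insert_subset_iff, ha, hmaps a ha]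
  have hP : #P + #{b ∈ P | σ b = b} = 2 := by
    by_cases h : σ a = a
    · simp [P, h, filter_singleton]
    · have : σ (σ a) ≠ σ a := by rwa [hinv a ha, ne_comm]
      simp [P, h, this, filter_insert, filter_singleton, Ne.symm h]
  set S' := S \ P
  have hmem' : ∀ b ∈ S', b ∈ S ∧ b ≠ a ∧ b ≠ σ a := by simp [S', P]
  obtain ⟨T, hTS, hcover, hcard⟩ := ih S' (sdiff_ssubset hPS (by simp [P])) (fun b hb => by
    obtain ⟨hb, hba, hbσ⟩ := hmem' b hb
    simp only [S', P, mem_sdiff, mem_insert, mem_singleton, not_or]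
    refine ⟨hmaps b hb, fun h => hbσ ?_, fun h => hba ?_⟩
    · rw [← h, hinv b hb]
    · rw [← hinv b hb, h, hinv a ha])
    (fun b hb => hinv b (hmem' b hb).1)
  refine ⟨insert a T, insert_subset ha (hTS.trans sdiff_subset), fun b hb => ?_, ?_⟩
  · by_cases hb' : b ∈ S'
    · rcases hcover b hb' with h | h <;> simp [h]
    · simp only [S', P, mem_sdiff, hb, true_and, not_not, mem_insert, mem_singleton] at hb'
      rcases hb' with rfl | rfl
      · simp
      · simp [hinv a ha]
  · have hdisj : Disjoint S' P := sdiff_disjoint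
    rw [← sdiff_union_of_subset hPS, filter_union, card_union_of_disjoint hdisj,
      card_union_of_disjoint (disjoint_filter_filter hdisj)]
    have := card_insert_le a T
    omega

theorem rank_tensorProduct_le_of_span_eq_top {R : Type*} {A M : Type u} [CommRing R]
    [CommRing A] [Algebra R A] [StrongRankCondition A] [AddCommGroup M] [Module R M]
    {s : Set M} (hs : Submodule.span R s = ⊤) : Module.rank A (A ⊗[R] M) ≤ Cardinal.mk s := by
  have hspan : Submodule.span A (TensorProduct.mk R A M 1 '' s) = ⊤ := by
    rw [← Submodule.baseChange_span, hs, Submodule.baseChange_top]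
  calc Module.rank A (A ⊗[R] M)
      = Module.rank A (Submodule.span A (TensorProduct.mk R A M 1 '' s)) := by
        rw [hspan, rank_top]
    _ ≤ Cardinal.mk (TensorProduct.mk R A M 1 '' s) := rank_span_le _
    _ ≤ Cardinal.mk s := Cardinal.mk_image_le

namespace Subgroup

variable {G : Type u} [CommGroup G]

theorem closure_eq_of_mem_or_div_mem {c : G} {S U : Set G} (hUS : U ⊆ closure S)
    (hc : c ∈ closure U) (hcover : ∀ s ∈ S, s ∈ U ∨ c / s ∈ U) :
    closure U = closure S := by
  refine le_antisymm ((closure_le _).2 hUS) ((closure_le _).2 fun s hs => ?_)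
  rcases hcover s hs with h | h
  · exact subset_closure h
  · rw [← div_div_cancel c s]
    exact div_mem hc (subset_closure h)

theorem exists_card_le_closure_eq_of_div_mem [DecidableEq G] (c : G) (S : Finset G)
    (hS : ∀ s ∈ S, c / s ∈ S) (hsq : #{s ∈ S | s * s = c} ≤ 1) :
    ∃ U : Finset G, #U ≤ #S / 2 + 1 ∧ closure (U : Set G) = closure S := by
  obtain ⟨T, hTS, hcover, hcard⟩ := S.exists_subset_involution_transversal (c / ·) hS
    (fun s _ => div_div_cancel c s)
  have hfix : {s ∈ S | c / s = s} = {s ∈ S | s * s = c} := by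
    refine filter_congr fun s _ => ?_
    rw [div_eq_iff_eq_mul, eq_comm]
  rw [hfix] at hcard
  have hTcl : (T : Set G) ⊆ closure (S : Set G) := fun s hs => subset_closure (hTS hs)
  by_cases hsqrt : ∃ γ ∈ S, γ * γ = c
  · obtain ⟨γ, hγS, hγ⟩ := hsqrt
    refine ⟨T, by omega, closure_eq_of_mem_or_div_mem hTcl ?_ hcover⟩
    rw [← hγ]
    have : γ ∈ T := by
      rcases hcover γ hγS with h | h
      · exact h
      · rwa [← hγ, mul_div_cancel_right] at h
    exact mul_mem (subset_closure this) (subset_closure this)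
  · push Not at hsqrt
    rcases S.eq_empty_or_nonempty with rfl | ⟨s, hs⟩
    · exact ⟨∅, by simp⟩
    have : #{s ∈ S | s * s = c} = 0 := by simpa [filter_eq_empty_iff] using hsqrt
    refine ⟨insert c T, (card_insert_le _ _).trans (by omega),
      closure_eq_of_mem_or_div_mem ?_ (subset_closure (mem_insert_self _ _))
        fun s hs => (hcover s hs).imp (mem_insert_of_mem ·) (mem_insert_of_mem ·)⟩
    rw [coe_insert, Set.insert_subset_iff]
    refine ⟨?_, hTcl⟩
    rw [← mul_div_cancel s c]
    exact mul_mem (subset_closure hs) (subset_closure (hS s hs))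

theorem span_int_toMul_preimage_eq_top {s : Set G} (hs : closure s = ⊤) :
    Submodule.span ℤ (Additive.toMul ⁻¹' s) = ⊤ := by
  apply Submodule.toAddSubgroup_injective
  rw [Submodule.span_int_eq_addSubgroupClosure, ← toAddSubgroup_closure, hs]
  rfl

theorem rank_tensorProduct_additive_closure_le (A : Type u) [CommRing A] [StrongRankCondition A]
    (s : Set G) :
    Module.rank A (A ⊗[ℤ] Additive (closure s)) ≤ Cardinal.mk s :=
  (rank_tensorProduct_le_of_span_eq_top
    (span_int_toMul_preimage_eq_top (G := closure s) closure_closure_coe_preimage)).trans <|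
    (Cardinal.mk_preimage_of_injective _ _ Additive.toMul.injective).trans <|
      Cardinal.mk_preimage_of_injective _ _ Subtype.val_injective

end Subgroup

theorem stmt_4_general (q : ℤ) (hq : 2 ≤ q) (R : Finset ℂ)
    (hconj : ∀ α ∈ R, (q : ℂ) / α ∈ R)
    (hnotsmall : ∀ α₁ ∈ R, ∀ α₂ ∈ R, α₁ ≠ α₂ → ∀ n : ℕ, 0 < n → (α₁ / α₂) ^ n ≠ 1) :
    Module.rank ℚ
        (ℚ ⊗[ℤ] Additive ↥(Subgroup.closure {x : ℂˣ | (x : ℂ) ∈ R})) ≤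
      ((R.card / 2 + 1 : ℕ) : Cardinal) := by
  classical
  have hq0 : (q : ℂ) ≠ 0 := by exact_mod_cast (by omega : q ≠ 0)
  set c : ℂˣ := Units.mk0 q hq0
  set S : Finset ℂˣ := R.preimage Units.val Units.val_injective.injOn
  have hmemS : ∀ u : ℂˣ, u ∈ S ↔ (u : ℂ) ∈ R := fun u => mem_preimage
  have hdiv : ∀ u ∈ S, c / u ∈ S := fun u hu => by
    simpa [hmemS, c] using hconj u ((hmemS u).1 hu)
  have hsq : #{u ∈ S | u * u = c} ≤ 1 := by
    refine card_le_one.2 fun u hu v hv => by_contra fun huv => ?_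
    simp only [mem_filter, hmemS] at hu hv
    refine hnotsmall u hu.1 v hv.1 (fun h => huv (Units.ext h)) 2 two_pos ?_
    rw [div_pow, sq, sq, ← Units.val_mul, hu.2, ← Units.val_mul, hv.2, div_self c.ne_zero]
  have hSR : #S ≤ #R := card_le_card_of_injOn Units.val (fun u hu => (hmemS u).1 hu)
    Units.val_injective.injOn
  obtain ⟨U, hU, hUS⟩ := Subgroup.exists_card_le_closure_eq_of_div_mem c S hdiv hsq
  have hSset : (S : Set ℂˣ) = {x : ℂˣ | (x : ℂ) ∈ R} := coe_preimage _ _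
  rw [← hSset, ← hUS]
  calc _ ≤ Cardinal.mk (U : Set ℂˣ) := Subgroup.rank_tensorProduct_additive_closure_le ℚ _
    _ = #U := Cardinal.mk_coe_finset
    _ ≤ ((#R / 2 + 1 : ℕ) : Cardinal) := by exact_mod_cast hU.trans (by omega)

/-- Assume `R` is not small. Then the rank of the subgroup `Γ ≤ ℂˣ`
generated by `R` (rank meaning `dim_ℚ (Γ ⊗_ℤ ℚ)`) is at most `⌊#R/2⌋ + 1`. -/
theorem stmt_4 (q : ℤ) (hq : 2 ≤ q) (R : Finset ℂ) (hRne : R.Nonempty)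
    (hR0 : ∀ α ∈ R, α ≠ 0)
    (habs : ∀ α ∈ R, ‖α‖ ^ 2 = (q : ℝ))
    (hconj : ∀ α ∈ R, (q : ℂ) / α ∈ R)
    (hnotsmall : ∀ α₁ ∈ R, ∀ α₂ ∈ R, α₁ ≠ α₂ → ∀ n : ℕ, 0 < n → (α₁ / α₂) ^ n ≠ 1) :
    Module.rank ℚ
        (ℚ ⊗[ℤ] Additive ↥(Subgroup.closure {x : ℂˣ | (x : ℂ) ∈ R})) ≤
      ((R.card / 2 + 1 : ℕ) : Cardinal) :=
  stmt_4_general q hq R hconj hnotsmall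
end

section
/- Let e : R → ℤ be a nontrivial admissible function, and define e₀ : R → ℤ by e₀(α) = e(α) for α ∈ R∖R^ι and e₀(β) = 0 for β ∈ R^ι. Then e₀ is nontrivial, and for every nonzero even integer m the function m·e₀ is a nontrivial admissible function whose weight satisfies wt(m·e₀) = |m|·wt(e₀) ≤ |m|·wt(e). -/
/-!
On `R` complex conjugation is `α ↦ q / α`, and `R^ι` is the set of real points `±√q` of `R`.
If `e₀` were trivial, `e` would be conjugation-invariant off `R^ι`, so the product of the
`α ^ e α` over the non-real `α` pairs off into a power `q ^ u`. Admissibility then makes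
`(√q) ^ x * (-√q) ^ y` (the product over `R^ι`) an integral power of `q`, and comparing signs and
absolute values (`√q ≠ 1`) shows that `x` and `y` are even: `e` would be trivial.
For `m • e₀`: the product `P` of the `α ^ e₀ α` is `q ^ d` divided by the real product over `R^ι`,
so `P` is real and `P ^ 2 = P * conj P` is a power of `q`.
-/

open Finset ComplexConjugate

theorem zpow_sum₀ {ι G₀ : Type*} [CommGroupWithZero G₀] {a : G₀} (ha : a ≠ 0) (s : Finset ι)
    (n : ι → ℤ) : a ^ (∑ i ∈ s, n i) = ∏ i ∈ s, a ^ n i := by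
  induction s using Finset.cons_induction with
  | empty => simp
  | cons i s hi ih => rw [sum_cons, prod_cons, zpow_add₀ ha, ih]

theorem even_and_even_of_zpow_mul_neg_zpow_eq {c : ℝ} (hc0 : 0 < c) (hc1 : c ≠ 1) {x y n : ℤ}
    (h : c ^ x * (-c) ^ y = c ^ (2 * n)) : Even x ∧ Even y := by
  rcases Int.even_or_odd y with hy | hy
  · rw [hy.neg_zpow, ← zpow_add₀ hc0.ne'] at h
    obtain ⟨k, rfl⟩ := hy
    exact ⟨⟨n - k, by linarith [zpow_right_injective₀ hc0 hc1 h]⟩, ⟨k, rfl⟩⟩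
  · rw [hy.neg_zpow] at h
    nlinarith [zpow_pos hc0 x, zpow_pos hc0 y, zpow_pos hc0 (2 * n)]

theorem even_of_prod_zpow_eq_zpow {q : ℝ} (hq0 : 0 < q) (hq1 : q ≠ 1) {s : Finset ℂ}
    (hs : ∀ z ∈ s, z ^ 2 = q) {a : ℂ → ℤ} {n : ℤ} (h : ∏ z ∈ s, z ^ a z = (q : ℂ) ^ n) :
    ∀ z ∈ s, Even (a z) := by
  set c := √q
  have hc0 : 0 < c := Real.sqrt_pos.2 hq0
  have hc1 : c ≠ 1 := by rwa [Ne, Real.sqrt_eq_one]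
  have hcq : (c : ℂ) ^ 2 = q := by rw [← Complex.ofReal_pow, Real.sq_sqrt hq0.le]
  have hpm : ∀ z ∈ s, z = c ∨ z = -c := fun z hz =>
    sq_eq_sq_iff_eq_or_eq_neg.1 (by rw [hs z hz, hcq])
  set a' : ℂ → ℤ := fun z => if z ∈ s then a z else 0
  have hne : (c : ℂ) ≠ -c := fun h => hc0.ne' (by exact_mod_cast CharZero.eq_neg_self_iff.1 h)
  have hprod : ∏ z ∈ s, z ^ a z = (c : ℂ) ^ a' c * (-(c : ℂ)) ^ a' (-c) :=
    calc ∏ z ∈ s, z ^ a z = ∏ z ∈ s, z ^ a' z := prod_congr rfl fun z hz => by simp [a', hz]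
      _ = ∏ z ∈ ({(c : ℂ), -(c : ℂ)} : Finset ℂ), z ^ a' z :=
        prod_subset (fun z hz => by simpa using hpm z hz) fun z _ hz => by simp [a', hz]
      _ = _ := prod_pair hne
  have hpair : (c : ℂ) ^ a' c * (-(c : ℂ)) ^ a' (-c) = (c : ℂ) ^ (2 * n) := by
    rw [← hprod, h, ← hcq, ← zpow_natCast, ← zpow_mul, Nat.cast_ofNat]
  obtain ⟨hx, hy⟩ := even_and_even_of_zpow_mul_neg_zpow_eq hc0 hc1 (by exact_mod_cast hpair)
  intro z hz
  rcases hpm z hz with rfl | rfl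
  · simpa [a', hz] using hx
  · simpa [a', hz] using hy

theorem Complex.prod_eq_prod_filter_im_pos_mul_conj {M : Type*} [CommMonoid M] {s : Finset ℂ}
    (hs : ∀ z ∈ s, conj z ∈ s) (him : ∀ z ∈ s, z.im ≠ 0) (f : ℂ → M) :
    ∏ z ∈ s, f z = ∏ z ∈ s with 0 < z.im, f z * f (conj z) := by
  rw [prod_mul_distrib, ← prod_filter_mul_prod_filter_not s (0 < ·.im)]
  congr 1
  refine prod_nbij' conj conj (fun z hz => ?_) (fun z hz => ?_) (fun z _ => conj_conj z)
    (fun z _ => conj_conj z) (fun z _ => by rw [conj_conj])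
  · rw [mem_filter] at hz ⊢
    exact ⟨hs z hz.1, by simpa using (him z hz.1).lt_of_le (not_lt.1 hz.2)⟩
  · rw [mem_filter] at hz ⊢
    exact ⟨hs z hz.1, by simpa using hz.2.le⟩

theorem Complex.prod_zpow_eq_zpow_of_conj_invariant {s : Finset ℂ} {q : ℂ} (hq : q ≠ 0)
    (hs : ∀ z ∈ s, conj z ∈ s) (him : ∀ z ∈ s, z.im ≠ 0) (hmul : ∀ z ∈ s, z * conj z = q)
    {e : ℂ → ℤ} (he : ∀ z ∈ s, e (conj z) = e z) :
    ∏ z ∈ s, z ^ e z = q ^ ∑ z ∈ s with 0 < z.im, e z := by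
  rw [prod_eq_prod_filter_im_pos_mul_conj hs him, zpow_sum₀ hq]
  refine prod_congr rfl fun z hz => ?_
  have hz := (mem_filter.1 hz).1
  rw [he z hz, ← mul_zpow, hmul z hz]

theorem Complex.prod_zpow_mul_conj {s : Finset ℂ} {q : ℂ} (hq : q ≠ 0)
    (hmul : ∀ z ∈ s, z * conj z = q) (e : ℂ → ℤ) :
    (∏ z ∈ s, z ^ e z) * conj (∏ z ∈ s, z ^ e z) = q ^ ∑ z ∈ s, e z := by
  rw [map_prod, ← prod_mul_distrib, zpow_sum₀ hq]
  refine prod_congr rfl fun z hz => ?_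
  rw [map_zpow₀, ← mul_zpow, hmul z hz]

def IsAdmissible (R : Finset ℂ) (q : ℂ) (e : ℂ → ℤ) : Prop :=
  ∃ d : ℤ, ∏ α ∈ R, α ^ e α = q ^ d

def IsTrivial (R : Finset ℂ) (q : ℂ) (e : ℂ → ℤ) : Prop :=
  (∀ α ∈ R, e α = e (q / α)) ∧ ∀ β ∈ R, β ^ 2 = q → Even (e β)

section MulConj

variable {q : ℝ} {α : ℂ}

theorem ne_zero_of_mul_conj_eq (hq : q ≠ 0) (h : α * conj α = q) : α ≠ 0 := by
  rintro rfl
  exact hq (by simpa using h.symm)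

theorem conj_eq_div_of_mul_conj_eq (hq : q ≠ 0) (h : α * conj α = q) : conj α = q / α :=
  eq_div_of_mul_eq (ne_zero_of_mul_conj_eq hq h) (by rw [mul_comm, h])

theorem conj_eq_self_of_mul_conj_eq_of_sq_eq (hq : q ≠ 0) (h : α * conj α = q)
    (hsq : α ^ 2 = q) : conj α = α :=
  mul_left_cancel₀ (ne_zero_of_mul_conj_eq hq h) (by rw [h, ← hsq, sq])

theorem im_ne_zero_of_mul_conj_eq_of_sq_ne (h : α * conj α = q) (hsq : α ^ 2 ≠ q) :
    α.im ≠ 0 := fun him => hsq (by rw [sq, ← h, Complex.conj_eq_iff_im.2 him])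

theorem conj_sq_ne_of_sq_ne (hsq : α ^ 2 ≠ q) : conj α ^ 2 ≠ q := fun h =>
  hsq (by simpa using congrArg conj h)

end MulConj

section WeilSet

variable {R : Finset ℂ} {q : ℝ} {e : ℂ → ℤ}

theorem exists_prod_zpow_filter_sq_ne_eq_zpow (hq : q ≠ 0) (hR : ∀ α ∈ R, conj α ∈ R)
    (hmul : ∀ α ∈ R, α * conj α = q) (he : ∀ α ∈ R, α ^ 2 ≠ q → e (conj α) = e α) :
    ∃ u : ℤ, ∏ α ∈ R with α ^ 2 ≠ (q : ℂ), α ^ e α = (q : ℂ) ^ u := by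
  refine ⟨_, Complex.prod_zpow_eq_zpow_of_conj_invariant (by exact_mod_cast hq)
    (fun α hα => ?_) (fun α hα => ?_) (fun α hα => ?_) (fun α hα => ?_)⟩
  all_goals rw [mem_filter] at hα
  · exact mem_filter.2 ⟨hR α hα.1, conj_sq_ne_of_sq_ne hα.2⟩
  · exact im_ne_zero_of_mul_conj_eq_of_sq_ne (hmul α hα.1) hα.2
  · exact hmul α hα.1
  · exact he α hα.1 hα.2

theorem IsAdmissible.isTrivial (hq0 : 0 < q) (hq1 : q ≠ 1) (hR : ∀ α ∈ R, conj α ∈ R)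
    (hmul : ∀ α ∈ R, α * conj α = q) (he : IsAdmissible R q e)
    (hsymm : ∀ α ∈ R, α ^ 2 ≠ q → e α = e (q / α)) : IsTrivial R q e := by
  obtain ⟨d, hd⟩ := he
  have hqC : (q : ℂ) ≠ 0 := by exact_mod_cast hq0.ne'
  have hdiv : ∀ α ∈ R, (q : ℂ) / α = conj α := fun α hα =>
    (conj_eq_div_of_mul_conj_eq hq0.ne' (hmul α hα)).symm
  obtain ⟨u, hu⟩ := exists_prod_zpow_filter_sq_ne_eq_zpow hq0.ne' hR hmul fun α hα hsq => by
    rw [← hdiv α hα]; exact (hsymm α hα hsq).symm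
  have hA : ∏ α ∈ R with α ^ 2 = (q : ℂ), α ^ e α = (q : ℂ) ^ (d - u) := by
    rw [zpow_sub₀ hqC, ← hd, ← prod_filter_mul_prod_filter_not R (· ^ 2 = (q : ℂ)), hu,
      mul_div_cancel_right₀ _ (zpow_ne_zero _ hqC)]
  refine ⟨fun α hα => ?_, fun β hβ hsq => even_of_prod_zpow_eq_zpow hq0 hq1
    (fun z hz => (mem_filter.1 hz).2) hA β (mem_filter.2 ⟨hβ, hsq⟩)⟩
  by_cases hsq : α ^ 2 = q
  · rw [hdiv α hα, conj_eq_self_of_mul_conj_eq_of_sq_eq hq0.ne' (hmul α hα) hsq]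
  · exact hsymm α hα hsq

theorem sq_prod_zpow_filter_sq_ne (hq : q ≠ 0) (hmul : ∀ α ∈ R, α * conj α = q)
    (he : IsAdmissible R q e) :
    (∏ α ∈ R with α ^ 2 ≠ (q : ℂ), α ^ e α) ^ 2 = (q : ℂ) ^ ∑ α ∈ R with α ^ 2 ≠ (q : ℂ), e α := by
  obtain ⟨d, hd⟩ := he
  have hqC : (q : ℂ) ≠ 0 := by exact_mod_cast hq
  rw [← prod_filter_mul_prod_filter_not R (· ^ 2 = (q : ℂ))] at hd
  set A := ∏ α ∈ R with α ^ 2 = (q : ℂ), α ^ e α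
  set B := ∏ α ∈ R with α ^ 2 ≠ (q : ℂ), α ^ e α
  have hA0 : A ≠ 0 := prod_ne_zero_iff.2 fun α hα =>
    zpow_ne_zero _ (ne_zero_of_mul_conj_eq hq (hmul α (mem_filter.1 hα).1))
  have hA : conj A = A := by
    rw [map_prod]
    refine prod_congr rfl fun α hα => ?_
    rw [mem_filter] at hα
    rw [map_zpow₀, conj_eq_self_of_mul_conj_eq_of_sq_eq hq (hmul α hα.1) hα.2]
  have hB : conj B = B := by
    rw [eq_div_of_mul_eq hA0 ((mul_comm B A).trans hd), map_div₀, map_zpow₀, Complex.conj_ofReal,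
      hA]
  rw [sq]
  nth_rewrite 2 [← hB]
  exact Complex.prod_zpow_mul_conj hqC (fun α hα => hmul α (mem_filter.1 hα).1) e

theorem IsAdmissible.mul_of_even (hq : q ≠ 0) (hmul : ∀ α ∈ R, α * conj α = q)
    (he : IsAdmissible R q e) {e₀ : ℂ → ℤ}
    (he₀ : ∀ α ∈ R, e₀ α = if α ^ 2 = (q : ℂ) then 0 else e α) {m : ℤ} (hm : Even m) :
    IsAdmissible R q fun α => m * e₀ α := by
  obtain ⟨k, rfl⟩ := hm
  have hP₀ : ∏ α ∈ R, α ^ e₀ α = ∏ α ∈ R with α ^ 2 ≠ (q : ℂ), α ^ e α := by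
    rw [← prod_filter_of_ne (p := (· ^ 2 ≠ (q : ℂ))) fun α hα hne hsq =>
      hne (by rw [he₀ α hα, if_pos hsq, zpow_zero])]
    refine prod_congr rfl fun α hα => ?_
    rw [mem_filter] at hα
    rw [he₀ α hα.1, if_neg hα.2]
  refine ⟨k * ∑ α ∈ R with α ^ 2 ≠ (q : ℂ), e α, ?_⟩
  simp_rw [mul_comm (k + k), zpow_mul, prod_zpow, hP₀, ← two_mul, zpow_mul, zpow_ofNat,
    sq_prod_zpow_filter_sq_ne hq hmul he, ← zpow_mul, mul_comm]

end WeilSet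

theorem stmt_7_general (q : ℤ) (hq : 2 ≤ q) (R : Finset ℂ)
    (habs : ∀ α ∈ R, ‖α‖ ^ 2 = (q : ℝ))
    (hconj : ∀ α ∈ R, (q : ℂ) / α ∈ R)
    (e : ℂ → ℤ)
    (hadm : ∃ d : ℤ, ∏ α ∈ R, α ^ e α = (q : ℂ) ^ d)
    (hnontriv : ¬ ((∀ α ∈ R, e α = e ((q : ℂ) / α)) ∧
      ∀ β ∈ R, β ^ 2 = (q : ℂ) → Even (e β)))
    (e₀ : ℂ → ℤ)
    (he₀ : ∀ α ∈ R, e₀ α = if α ^ 2 = (q : ℂ) then 0 else e α) :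
    (¬ ((∀ α ∈ R, e₀ α = e₀ ((q : ℂ) / α)) ∧
        ∀ β ∈ R, β ^ 2 = (q : ℂ) → Even (e₀ β))) ∧
      ∀ m : ℤ, m ≠ 0 → Even m →
        (∃ d : ℤ, ∏ α ∈ R, α ^ (m * e₀ α) = (q : ℂ) ^ d) ∧
          (¬ ((∀ α ∈ R, m * e₀ α = m * e₀ ((q : ℂ) / α)) ∧
            ∀ β ∈ R, β ^ 2 = (q : ℂ) → Even (m * e₀ β))) ∧
          (∑ α ∈ R, |m * e₀ α|) = |m| * ∑ α ∈ R, |e₀ α| ∧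
          |m| * (∑ α ∈ R, |e₀ α|) ≤ |m| * ∑ α ∈ R, |e α| := by
  rw [← Complex.ofReal_intCast] at hconj hadm hnontriv he₀ ⊢
  have hq0 : (0 : ℝ) < q := by exact_mod_cast (by omega : (0 : ℤ) < q)
  have hq1 : (q : ℝ) ≠ 1 := by exact_mod_cast (by omega : q ≠ 1)
  have hmul : ∀ α ∈ R, α * conj α = (q : ℝ) := fun α hα => by
    rw [Complex.mul_conj, Complex.normSq_eq_norm_sq, habs α hα]
  have hdiv : ∀ α ∈ R, ((q : ℝ) : ℂ) / α = conj α := fun α hα =>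
    (conj_eq_div_of_mul_conj_eq hq0.ne' (hmul α hα)).symm
  have hR : ∀ α ∈ R, conj α ∈ R := fun α hα => hdiv α hα ▸ hconj α hα
  have hsymm₀ : ¬ ∀ α ∈ R, e₀ α = e₀ ((q : ℝ) / α) := fun h₀ => hnontriv <|
    IsAdmissible.isTrivial hq0 hq1 hR hmul hadm fun α hα hsq =>
      calc e α = e₀ α := by rw [he₀ α hα, if_neg hsq]
        _ = e₀ ((q : ℝ) / α) := h₀ α hα
        _ = e ((q : ℝ) / α) := by
          rw [hdiv α hα, he₀ _ (hR α hα), if_neg (conj_sq_ne_of_sq_ne hsq)]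
  refine ⟨fun h => hsymm₀ h.1, fun m hm0 hm => ⟨IsAdmissible.mul_of_even hq0.ne' hmul hadm he₀ hm,
    fun h => hsymm₀ fun α hα => mul_left_cancel₀ hm0 (h.1 α hα), by simp only [abs_mul, mul_sum],
    mul_le_mul_of_nonneg_left (sum_le_sum fun α hα => ?_) (abs_nonneg m)⟩⟩
  rw [he₀ α hα]
  split_ifs <;> simp

/-- Let `e : R → ℤ` be a nontrivial admissible function and let
`e₀` agree with `e` on `R ∖ R^ι` and vanish on `R^ι = {β ∈ R | β² = q}`. Then `e₀` is
nontrivial, and for every nonzero even integer `m` the function `m • e₀` is a nontrivial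
admissible function whose weight satisfies `wt(m • e₀) = |m| · wt(e₀) ≤ |m| · wt(e)`. -/
theorem stmt_7 (q : ℤ) (hq : 2 ≤ q) (R : Finset ℂ) (hRne : R.Nonempty)
    (hR0 : ∀ α ∈ R, α ≠ 0)
    (habs : ∀ α ∈ R, ‖α‖ ^ 2 = (q : ℝ))
    (hconj : ∀ α ∈ R, (q : ℂ) / α ∈ R)
    (e : ℂ → ℤ)
    (hadm : ∃ d : ℤ, ∏ α ∈ R, α ^ e α = (q : ℂ) ^ d)
    (hnontriv : ¬ ((∀ α ∈ R, e α = e ((q : ℂ) / α)) ∧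
      ∀ β ∈ R, β ^ 2 = (q : ℂ) → Even (e β)))
    (e₀ : ℂ → ℤ)
    (he₀ : ∀ α ∈ R, e₀ α = if α ^ 2 = (q : ℂ) then 0 else e α) :
    (¬ ((∀ α ∈ R, e₀ α = e₀ ((q : ℂ) / α)) ∧
        ∀ β ∈ R, β ^ 2 = (q : ℂ) → Even (e₀ β))) ∧
      ∀ m : ℤ, m ≠ 0 → Even m →
        (∃ d : ℤ, ∏ α ∈ R, α ^ (m * e₀ α) = (q : ℂ) ^ d) ∧
          (¬ ((∀ α ∈ R, m * e₀ α = m * e₀ ((q : ℂ) / α)) ∧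
            ∀ β ∈ R, β ^ 2 = (q : ℂ) → Even (m * e₀ β))) ∧
          (∑ α ∈ R, |m * e₀ α|) = |m| * ∑ α ∈ R, |e₀ α| ∧
          |m| * (∑ α ∈ R, |e₀ α|) ≤ |m| * ∑ α ∈ R, |e α| :=
  stmt_7_general q hq R habs hconj e hadm hnontriv e₀ he₀
end

section
/- Suppose α₁ and α₂ are distinct elements of R with α₁² ≠ q and α₂² ≠ q, and suppose m is a positive integer such that (α₂/α₁)^m = 1. Then there exists a reduced admissible function e : R → ℤ of weight 2m. -/
/-!
Encode a nonnegative `e` as a multiset `S`, with `e α` the multiplicity of `α`; then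
`∏ α ^ e α = S.prod` and the weight is `S.card`. Take `S = m • {α₂, q/α₁}`: its product is
`(α₂ · q/α₁)^m = (α₂/α₁)^m q^m = q^m`, its cardinality is `2m`, and the hypotheses
`α₁ ≠ α₂`, `α₁² ≠ q`, `α₂² ≠ q` say exactly that `S` contains no pair `α, q/α` and no `β`
with `β² = q`.
-/

open Finset

section Count

variable {M : Type*} [DecidableEq M] {s : Finset M} {S : Multiset M}

theorem prod_zpow_count_eq_prod [DivisionCommMonoid M] (hS : ∀ x ∈ S, x ∈ s) :
    ∏ x ∈ s, x ^ (S.count x : ℤ) = S.prod := by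
  simp only [zpow_natCast]
  exact (prod_multiset_count_of_subset S s fun x hx => hS x (Multiset.mem_toFinset.1 hx)).symm

theorem sum_abs_count_eq_card (hS : ∀ x ∈ S, x ∈ s) :
    ∑ x ∈ s, |(S.count x : ℤ)| = S.card := by
  simp only [Nat.abs_cast]
  exact_mod_cast Multiset.sum_count_eq_card hS

end Count

section Field

variable {K : Type*} [Field K] {q a b : K}

theorem mul_div_pow_eq_pow_of_div_pow_eq_one {m : ℕ} (h : (b / a) ^ m = 1) :
    (b * (q / a)) ^ m = q ^ m := by
  rw [mul_div_assoc', mul_div_right_comm, mul_pow, h, one_mul]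

theorem div_notMem_pair (hq : q ≠ 0) (ha0 : a ≠ 0) (hb0 : b ≠ 0) (hab : a ≠ b)
    (ha : a ^ 2 ≠ q) (hb : b ^ 2 ≠ q) {x : K} (hx : x ∈ ({b, q / a} : Multiset K)) :
    q / x ∉ ({b, q / a} : Multiset K) := by
  simp only [Multiset.insert_eq_cons, Multiset.mem_cons, Multiset.mem_singleton] at hx ⊢
  rcases hx with rfl | rfl
  · rintro (h | h)
    · exact hb (by rw [sq, ← (div_eq_iff hb0).1 h])
    · rw [div_eq_div_iff hb0 ha0] at h
      exact hab (mul_left_cancel₀ hq h)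
  · rw [div_div_cancel₀ hq]
    rintro (h | h)
    · exact hab h
    · exact ha (by rw [sq, ← (eq_div_iff ha0).1 h])

theorem notMem_pair_of_sq_eq (hq : q ≠ 0) (ha0 : a ≠ 0) (ha : a ^ 2 ≠ q) (hb : b ^ 2 ≠ q)
    {x : K} (hx : x ^ 2 = q) : x ∉ ({b, q / a} : Multiset K) := by
  simp only [Multiset.insert_eq_cons, Multiset.mem_cons, Multiset.mem_singleton]
  rintro (rfl | rfl)
  · exact hb hx
  · rw [div_pow, div_eq_iff (pow_ne_zero 2 ha0), sq q] at hx
    exact ha (mul_left_cancel₀ hq hx).symm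

end Field

theorem stmt_8_general (q : ℤ) (hq : 2 ≤ q) (R : Finset ℂ)
    (hR0 : ∀ α ∈ R, α ≠ 0)
    (hconj : ∀ α ∈ R, (q : ℂ) / α ∈ R)
    (α₁ α₂ : ℂ) (h₁ : α₁ ∈ R) (h₂ : α₂ ∈ R) (hne : α₁ ≠ α₂)
    (hsq₁ : α₁ ^ 2 ≠ (q : ℂ)) (hsq₂ : α₂ ^ 2 ≠ (q : ℂ))
    (m : ℕ) (hm : 0 < m) (hroot : (α₂ / α₁) ^ m = 1) :
    ∃ (e : ℂ → ℤ) (d : ℤ),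
      (∏ α ∈ R, α ^ e α = (q : ℂ) ^ d) ∧ 1 ≤ d ∧
      (∀ α ∈ R, 0 ≤ e α) ∧
      (∀ α ∈ R, α ^ 2 ≠ (q : ℂ) → e α = 0 ∨ e ((q : ℂ) / α) = 0) ∧
      (∀ β ∈ R, β ^ 2 = (q : ℂ) → e β = 0 ∨ e β = 1) ∧
      (∑ α ∈ R, |e α|) = 2 * (m : ℤ) := by
  classical
  have hq0 : (q : ℂ) ≠ 0 := by exact_mod_cast (by omega : q ≠ 0)
  set S : Multiset ℂ := m • {α₂, (q : ℂ) / α₁}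
  have hmemS : ∀ x, x ∈ S ↔ x ∈ ({α₂, (q : ℂ) / α₁} : Multiset ℂ) := fun x => by
    simp only [S, Multiset.mem_nsmul, hm.ne', ne_eq, not_false_eq_true, true_and]
  have hSR : ∀ x ∈ S, x ∈ R := by
    intro x hx
    simp only [hmemS, Multiset.insert_eq_cons, Multiset.mem_cons, Multiset.mem_singleton] at hx
    rcases hx with rfl | rfl
    exacts [h₂, hconj α₁ h₁]
  have hcount : ∀ x, x ∉ ({α₂, (q : ℂ) / α₁} : Multiset ℂ) → (S.count x : ℤ) = 0 := fun x hx => by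
    rw [Multiset.count_eq_zero.2 (by rwa [hmemS]), Nat.cast_zero]
  refine ⟨fun x => (S.count x : ℤ), m, ?_, by exact_mod_cast hm, fun _ _ => by positivity, ?_, ?_, ?_⟩
  · rw [prod_zpow_count_eq_prod hSR, Multiset.prod_nsmul, Multiset.prod_pair,
      mul_div_pow_eq_pow_of_div_pow_eq_one hroot, zpow_natCast]
  · intro α _ _
    by_cases hα : α ∈ ({α₂, (q : ℂ) / α₁} : Multiset ℂ)
    · exact Or.inr (hcount _ (div_notMem_pair hq0 (hR0 α₁ h₁) (hR0 α₂ h₂) hne hsq₁ hsq₂ hα))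
    · exact Or.inl (hcount α hα)
  · exact fun β _ hβ => Or.inl (hcount β (notMem_pair_of_sq_eq hq0 (hR0 α₁ h₁) hsq₁ hsq₂ hβ))
  · rw [sum_abs_count_eq_card hSR, Multiset.card_nsmul, Multiset.card_pair]
    push_cast
    ring

/-- If `α₁, α₂` are distinct elements of `R` with `α₁² ≠ q`, `α₂² ≠ q`, and
`(α₂/α₁)^m = 1` for a positive integer `m`, then there is a reduced admissible function
`e : R → ℤ` of weight `2m`. -/
theorem stmt_8 (q : ℤ) (hq : 2 ≤ q) (R : Finset ℂ) (hRne : R.Nonempty)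
    (hR0 : ∀ α ∈ R, α ≠ 0)
    (habs : ∀ α ∈ R, ‖α‖ ^ 2 = (q : ℝ))
    (hconj : ∀ α ∈ R, (q : ℂ) / α ∈ R)
    (α₁ α₂ : ℂ) (h₁ : α₁ ∈ R) (h₂ : α₂ ∈ R) (hne : α₁ ≠ α₂)
    (hsq₁ : α₁ ^ 2 ≠ (q : ℂ)) (hsq₂ : α₂ ^ 2 ≠ (q : ℂ))
    (m : ℕ) (hm : 0 < m) (hroot : (α₂ / α₁) ^ m = 1) :
    ∃ (e : ℂ → ℤ) (d : ℤ),
      (∏ α ∈ R, α ^ e α = (q : ℂ) ^ d) ∧ 1 ≤ d ∧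
      (∀ α ∈ R, 0 ≤ e α) ∧
      (∀ α ∈ R, α ^ 2 ≠ (q : ℂ) → e α = 0 ∨ e ((q : ℂ) / α) = 0) ∧
      (∀ β ∈ R, β ^ 2 = (q : ℂ) → e β = 0 ∨ e β = 1) ∧
      (∑ α ∈ R, |e α|) = 2 * (m : ℤ) :=
  stmt_8_general q hq R hR0 hconj α₁ α₂ h₁ h₂ hne hsq₁ hsq₂ m hm hroot
end

section
/- Assume R is not small. Let w be a positive integer and suppose there exists a nontrivial admissible function on R of weight at most w. Then there exist a nonempty subset A₁ ⊆ R, an integer-valued function ẽ : A₁ → ℤ, and a positive integer s ≤ w such that: (1) for every α ∈ A₁ one has q/α ∉ A₁ and ẽ(α) > 0; (2) ∏_{α∈A₁} α^{ẽ(α)} = q^s. In particular, the function f : R → ℤ defined by f(α) = ẽ(α) for α ∈ A₁ and f(α) = 0 otherwise is a reduced admissible function of weight 2s ≤ 2w that vanishes identically on R^ι. -/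
/-!
Let `E α = e α - e (q / α)`. Taking absolute values in `∏ α ^ e α = q ^ d` gives `∑ e = 2 d`,
and then `∏ α ^ E α = 1`. If `E` vanished on `R`, `e` would be symmetric, and for `γ ^ 2 = q`
pairing `α` with `q / α` in `∏ (α / γ) ^ e α = q ^ d / γ ^ (2 d) = 1` would leave only the factor
`(-1) ^ e (-γ)`, so `e` would also be even on `R^ι`, i.e. trivial. Hence `A₁ = {α | 0 < E α}` is
nonempty; it meets neither `q / A₁` nor `R^ι`, and since `E = E⁺ - E⁺ (q / ·)` for `E⁺ = max E 0`,
the relation `∏ α ^ E α = 1` becomes `(∏_{A₁} α ^ E α) ^ 2 = q ^ s` with `s = ∑_{A₁} E`.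
Finally `2 s = ∑ |E| ≤ 2 ∑ |e| ≤ 2 w`, so `ẽ = 2 E` works.
-/

open Finset

lemma prod_zpow_eq_zpow_sum {G ι : Type*} [CommGroupWithZero G] {a : G} (ha : a ≠ 0)
    (s : Finset ι) (f : ι → ℤ) : ∏ i ∈ s, a ^ f i = a ^ ∑ i ∈ s, f i := by
  classical
  induction s using Finset.cons_induction with
  | empty => simp
  | cons i s hi ih => rw [prod_cons, sum_cons, zpow_add₀ ha, ih]

@[to_additive]
lemma prod_filter_pos_eq_prod_max_zero {ι M : Type*} [CommMonoid M] (s : Finset ι) (E : ι → ℤ)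
    (F : ι → ℤ → M) (hF : ∀ i, F i 0 = 1) :
    ∏ i ∈ s with 0 < E i, F i (E i) = ∏ i ∈ s, F i (max (E i) 0) := by
  rw [prod_filter]
  refine prod_congr rfl fun i _ => ?_
  split_ifs with h
  · rw [max_eq_left h.le]
  · rw [max_eq_right (not_lt.1 h), hF]

@[to_additive]
lemma prod_eq_prod_of_eq_ite {ι M : Type*} [CommMonoid M] [DecidableEq ι] {A R : Finset ι}
    (hAR : A ⊆ R) {f g : ι → ℤ} (hf : ∀ i, f i = if i ∈ A then g i else 0) (F : ι → ℤ → M)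
    (hF : ∀ i, F i 0 = 1) : ∏ i ∈ R, F i (f i) = ∏ i ∈ A, F i (g i) := by
  simp only [hf, apply_ite (F _), hF]
  rw [prod_ite_mem, inter_eq_right.2 hAR]

lemma sum_eq_two_mul_of_prod_zpow_eq {K : Type*} [NormedField K] {q : K} (hq : 1 < ‖q‖)
    {R : Finset K} (habs : ∀ α ∈ R, ‖α‖ ^ 2 = ‖q‖) {e : K → ℤ} {d : ℤ}
    (h : ∏ α ∈ R, α ^ e α = q ^ d) : ∑ α ∈ R, e α = 2 * d := by
  apply zpow_right_injective₀ (zero_lt_one.trans hq) hq.ne'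
  calc ‖q‖ ^ ∑ α ∈ R, e α = ∏ α ∈ R, (‖α‖ ^ 2) ^ e α := by
        rw [prod_congr rfl fun α hα => by rw [habs α hα],
          prod_zpow_eq_zpow_sum (zero_lt_one.trans hq).ne']
    _ = ‖∏ α ∈ R, α ^ e α‖ ^ 2 := by
        rw [norm_prod, ← prod_pow]
        refine prod_congr rfl fun α _ => ?_
        rw [norm_zpow, ← zpow_natCast, ← zpow_natCast, ← zpow_mul, ← zpow_mul, mul_comm]
    _ = ‖q‖ ^ (2 * d) := by
        rw [h, norm_zpow, ← zpow_natCast, ← zpow_mul, mul_comm, Nat.cast_ofNat]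

section Conjugation

variable {K : Type*} [Field K] {q : K} {R : Finset K}

lemma prod_comp_div_eq_prod {M : Type*} [CommMonoid M] (hq : q ≠ 0)
    (hconj : ∀ α ∈ R, q / α ∈ R) (g : K → M) :
    ∏ α ∈ R, g (q / α) = ∏ α ∈ R, g α :=
  prod_nbij' (q / ·) (q / ·) hconj hconj (fun _ _ => div_div_cancel₀ hq)
    (fun _ _ => div_div_cancel₀ hq) (fun _ _ => rfl)

lemma sum_comp_div_eq_sum {M : Type*} [AddCommMonoid M] (hq : q ≠ 0)
    (hconj : ∀ α ∈ R, q / α ∈ R) (g : K → M) :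
    ∑ α ∈ R, g (q / α) = ∑ α ∈ R, g α :=
  sum_nbij' (q / ·) (q / ·) hconj hconj (fun _ _ => div_div_cancel₀ hq)
    (fun _ _ => div_div_cancel₀ hq) (fun _ _ => rfl)

lemma prod_zpow_comp_div (hq : q ≠ 0) (hconj : ∀ α ∈ R, q / α ∈ R) (f : K → ℤ) :
    ∏ α ∈ R, α ^ f (q / α) = q ^ (∑ α ∈ R, f α) / ∏ α ∈ R, α ^ f α := by
  calc ∏ α ∈ R, α ^ f (q / α) = ∏ α ∈ R, (q / α) ^ f (q / (q / α)) :=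
        (prod_comp_div_eq_prod hq hconj fun α => α ^ f (q / α)).symm
    _ = ∏ α ∈ R, q ^ f α / α ^ f α :=
        prod_congr rfl fun α _ => by rw [div_div_cancel₀ hq, div_zpow]
    _ = _ := by rw [prod_div_distrib, prod_zpow_eq_zpow_sum hq]

def skewPart (q : K) (e : K → ℤ) (α : K) : ℤ := e α - e (q / α)

lemma skewPart_div (hq : q ≠ 0) (e : K → ℤ) (α : K) :
    skewPart q e (q / α) = -skewPart q e α := by
  simp only [skewPart, div_div_cancel₀ hq, neg_sub]

lemma prod_zpow_skewPart_eq (hq : q ≠ 0) (hR0 : ∀ α ∈ R, α ≠ 0) (hconj : ∀ α ∈ R, q / α ∈ R)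
    (f : K → ℤ) :
    ∏ α ∈ R, α ^ skewPart q f α = (∏ α ∈ R, α ^ f α) ^ 2 / q ^ ∑ α ∈ R, f α := by
  unfold skewPart
  rw [prod_congr rfl fun α hα => zpow_sub₀ (hR0 α hα) _ _, prod_div_distrib,
    prod_zpow_comp_div hq hconj, div_div_eq_mul_div, sq]

lemma prod_zpow_skewPart_eq_one (hq : q ≠ 0) (hR0 : ∀ α ∈ R, α ≠ 0)
    (hconj : ∀ α ∈ R, q / α ∈ R) {e : K → ℤ} {d : ℤ} (hprod : ∏ α ∈ R, α ^ e α = q ^ d)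
    (hsum : ∑ α ∈ R, e α = 2 * d) : ∏ α ∈ R, α ^ skewPart q e α = 1 := by
  rw [prod_zpow_skewPart_eq hq hR0 hconj, hprod, hsum, ← zpow_natCast, ← zpow_mul, mul_comm,
    Nat.cast_ofNat, div_self (zpow_ne_zero _ hq)]

lemma sum_abs_skewPart_le (hq : q ≠ 0) (hconj : ∀ α ∈ R, q / α ∈ R) (e : K → ℤ) :
    ∑ α ∈ R, |skewPart q e α| ≤ 2 * ∑ α ∈ R, |e α| :=
  calc ∑ α ∈ R, |skewPart q e α| ≤ ∑ α ∈ R, (|e α| + |e (q / α)|) :=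
        sum_le_sum fun α _ => abs_sub _ _
    _ = 2 * ∑ α ∈ R, |e α| := by
        rw [sum_add_distrib, sum_comp_div_eq_sum hq hconj fun α => |e α|, two_mul]

end Conjugation

section Parity

variable {K : Type*} [Field K] {q : K} {R : Finset K}

lemma even_of_symm_of_sq_eq (hK : ringChar K ≠ 2) (hR0 : ∀ α ∈ R, α ≠ 0)
    (hconj : ∀ α ∈ R, q / α ∈ R) {e : K → ℤ} (hsymm : ∀ α ∈ R, e (q / α) = e α) {d : ℤ}
    (hprod : ∏ α ∈ R, α ^ e α = q ^ d) (hsum : ∑ α ∈ R, e α = 2 * d) {γ : K}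
    (hγ : γ ^ 2 = q) (hγR : -γ ∈ R) : Even (e (-γ)) := by
  classical
  have hγ0 : γ ≠ 0 := neg_ne_zero.1 (hR0 _ hγR)
  have hq : q ≠ 0 := hγ ▸ pow_ne_zero 2 hγ0
  have htotal : ∏ α ∈ R, (α / γ) ^ e α = 1 := by
    rw [prod_congr rfl fun α _ => div_zpow α γ (e α), prod_div_distrib, hprod,
      prod_zpow_eq_zpow_sum hγ0, hsum, zpow_mul, zpow_ofNat, hγ, div_self (zpow_ne_zero _ hq)]
  have hsq : ∀ α, α ^ 2 = q → α ≠ -γ → α = γ := fun α hα hne =>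
    (sq_eq_sq_iff_eq_or_eq_neg.1 (hα.trans hγ.symm)).resolve_right hne
  -- Away from `-γ`, the factors `(α / γ) ^ e α` and `(q / α / γ) ^ e (q / α)` cancel in pairs.
  have hrest : ∏ α ∈ R.erase (-γ), (α / γ) ^ e α = 1 := by
    refine prod_involution (fun α _ => q / α) (fun α hα => ?_) (fun α hα hne hfix => ?_)
      (fun α hα => ?_) (fun α _ => div_div_cancel₀ hq)
    · have hα0 := hR0 α (mem_of_mem_erase hα)
      rw [hsymm α (mem_of_mem_erase hα), ← mul_zpow,
        show α / γ * (q / α / γ) = q / γ ^ 2 by field_simp, hγ, div_self hq, one_zpow]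
    · have hα0 := hR0 α (mem_of_mem_erase hα)
      have hαγ := hsq α (by field_simp at hfix; exact hfix.symm) (ne_of_mem_erase hα)
      exact hne (by rw [hαγ, div_self hγ0, one_zpow])
    · refine mem_erase.2 ⟨fun h => ne_of_mem_erase hα ?_, hconj α (mem_of_mem_erase hα)⟩
      rw [← div_div_cancel₀ hq (b := α), h, ← hγ]
      field_simp
  rw [← mul_prod_erase R _ hγR, hrest, mul_one, neg_div, div_self hγ0] at htotal
  by_contra hodd
  rw [Int.not_even_iff_odd.1 hodd |>.neg_one_zpow] at htotal
  exact hK (neg_one_eq_one_iff.1 htotal)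

lemma exists_skewPart_pos (hK : ringChar K ≠ 2) (hq : q ≠ 0) (hR0 : ∀ α ∈ R, α ≠ 0)
    (hconj : ∀ α ∈ R, q / α ∈ R) {e : K → ℤ} {d : ℤ} (hprod : ∏ α ∈ R, α ^ e α = q ^ d)
    (hsum : ∑ α ∈ R, e α = 2 * d)
    (hnontriv : ¬((∀ α ∈ R, e α = e (q / α)) ∧ ∀ β ∈ R, β ^ 2 = q → Even (e β))) :
    ∃ α ∈ R, 0 < skewPart q e α := by
  by_contra! hle
  have hsymm : ∀ α ∈ R, e (q / α) = e α := fun α hα => by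
    have h := hle _ (hconj α hα)
    rw [skewPart_div hq] at h
    have h' := hle α hα
    unfold skewPart at h h'
    omega
  refine hnontriv ⟨fun α hα => (hsymm α hα).symm, fun β hβ hβq => ?_⟩
  simpa using even_of_symm_of_sq_eq hK hR0 hconj hsymm hprod hsum (γ := -β)
    (by rw [neg_sq, hβq]) (by rwa [neg_neg])

end Parity

section PositivePart

variable {K : Type*} [Field K] {q : K} {R : Finset K} {E : K → ℤ}

lemma skewPart_max_zero (hanti : ∀ α ∈ R, E (q / α) = -E α) {α : K} (hα : α ∈ R) :
    skewPart q (fun β => max (E β) 0) α = E α := by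
  rw [skewPart, hanti α hα, max_zero_sub_max_neg_zero_eq_self]

lemma sum_abs_eq_two_mul_sum_filter_pos (hq : q ≠ 0) (hconj : ∀ α ∈ R, q / α ∈ R)
    (hanti : ∀ α ∈ R, E (q / α) = -E α) :
    ∑ α ∈ R, |E α| = 2 * ∑ α ∈ R with 0 < E α, E α := by
  calc ∑ α ∈ R, |E α| = ∑ α ∈ R, (max (E α) 0 + max (E (q / α)) 0) :=
        sum_congr rfl fun α hα => by rw [hanti α hα, max_zero_add_max_neg_zero_eq_abs_self]
    _ = 2 * ∑ α ∈ R with 0 < E α, E α := by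
        rw [sum_add_distrib, sum_comp_div_eq_sum hq hconj fun α => max (E α) 0,
          sum_filter_pos_eq_sum_max_zero R E (fun _ n => n) fun _ => rfl, two_mul]

lemma prod_filter_pos_zpow_two_mul (hq : q ≠ 0) (hR0 : ∀ α ∈ R, α ≠ 0)
    (hconj : ∀ α ∈ R, q / α ∈ R) (hanti : ∀ α ∈ R, E (q / α) = -E α)
    (hprod : ∏ α ∈ R, α ^ E α = 1) :
    ∏ α ∈ R with 0 < E α, α ^ (2 * E α) = q ^ ∑ α ∈ R with 0 < E α, E α := by
  rw [← prod_congr rfl fun α hα => congrArg (α ^ ·) (skewPart_max_zero hanti hα),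
    prod_zpow_skewPart_eq hq hR0 hconj, div_eq_one_iff_eq (zpow_ne_zero _ hq)] at hprod
  rw [sum_filter_pos_eq_sum_max_zero R E (fun _ n => n) fun _ => rfl, ← hprod,
    ← prod_filter_pos_eq_prod_max_zero R E (fun α n => α ^ n) fun α => zpow_zero α, ← prod_pow]
  exact prod_congr rfl fun α _ => by rw [mul_comm, zpow_mul, zpow_ofNat]

lemma div_notMem_filter_pos (hanti : ∀ α ∈ R, E (q / α) = -E α) {α : K}
    (hα : α ∈ R.filter (0 < E ·)) : q / α ∉ R.filter (0 < E ·) := by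
  rw [mem_filter] at hα ⊢
  rw [hanti α hα.1]
  omega

lemma notMem_filter_pos_of_sq_eq (hq : q ≠ 0) (hanti : ∀ α ∈ R, E (q / α) = -E α) {β : K}
    (hβ : β ∈ R) (hβq : β ^ 2 = q) : β ∉ R.filter (0 < E ·) := by
  have hβ0 : β ≠ 0 := by
    rintro rfl
    exact hq (by simp [← hβq])
  have hfix : q / β = β := by rw [← hβq, sq, mul_div_cancel_right₀ _ hβ0]
  have h := hanti β hβ
  rw [hfix] at h
  rw [mem_filter]
  omega

lemma eq_ite_filter_pos_spec [DecidableEq K] (hq : q ≠ 0) (hR0 : ∀ α ∈ R, α ≠ 0)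
    (hconj : ∀ α ∈ R, q / α ∈ R) (hanti : ∀ α ∈ R, E (q / α) = -E α)
    (hprod : ∏ α ∈ R, α ^ E α = 1) {f : K → ℤ}
    (hf : ∀ α, f α = if α ∈ R.filter (0 < E ·) then 2 * E α else 0) :
    (∏ α ∈ R, α ^ f α = q ^ ∑ α ∈ R with 0 < E α, E α) ∧ (∀ α, 0 ≤ f α) ∧
      (∀ α, f α = 0 ∨ f (q / α) = 0) ∧ (∀ β ∈ R, β ^ 2 = q → f β = 0) ∧
      ∑ α ∈ R, |f α| = 2 * ∑ α ∈ R with 0 < E α, E α := by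
  have hpos : ∀ α ∈ R.filter (0 < E ·), 0 < 2 * E α := fun α hα => by
    simpa using (mem_filter.1 hα).2
  have hfA : ∀ α ∉ R.filter (0 < E ·), f α = 0 := fun α hα => by rw [hf, if_neg hα]
  refine ⟨?_, fun α => ?_, fun α => ?_, fun β hβ hβq => hfA β ?_, ?_⟩
  · rw [prod_eq_prod_of_eq_ite (filter_subset _ R) hf (fun α n => α ^ n) zpow_zero,
      prod_filter_pos_zpow_two_mul hq hR0 hconj hanti hprod]
  · rw [hf]
    split_ifs with h
    exacts [(hpos α h).le, le_rfl]
  · by_cases h : α ∈ R.filter (0 < E ·)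
    exacts [.inr (hfA _ (div_notMem_filter_pos hanti h)), .inl (hfA α h)]
  · exact notMem_filter_pos_of_sq_eq hq hanti hβ hβq
  · rw [sum_eq_sum_of_eq_ite (filter_subset _ R) hf (fun _ n => |n|) fun _ => abs_zero, mul_sum]
    exact sum_congr rfl fun α hα => abs_of_pos (hpos α hα)

end PositivePart

theorem stmt_9_general (q : ℤ) (hq : 2 ≤ q) (R : Finset ℂ)
    (hR0 : ∀ α ∈ R, α ≠ 0)
    (habs : ∀ α ∈ R, ‖α‖ ^ 2 = (q : ℝ))
    (hconj : ∀ α ∈ R, (q : ℂ) / α ∈ R)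
    (w : ℤ)
    (hex : ∃ e : ℂ → ℤ,
      (∃ d : ℤ, ∏ α ∈ R, α ^ e α = (q : ℂ) ^ d) ∧
      (¬ ((∀ α ∈ R, e α = e ((q : ℂ) / α)) ∧
        ∀ β ∈ R, β ^ 2 = (q : ℂ) → Even (e β))) ∧
      (∑ α ∈ R, |e α|) ≤ w) :
    ∃ (A₁ : Finset ℂ) (etil : ℂ → ℤ) (s : ℤ),
      A₁ ⊆ R ∧ A₁.Nonempty ∧ 0 < s ∧ s ≤ w ∧
      (∀ α ∈ A₁, (q : ℂ) / α ∉ A₁ ∧ 0 < etil α) ∧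
      (∏ α ∈ A₁, α ^ etil α = (q : ℂ) ^ s) ∧
      -- the "in particular" part, for `f` the extension of `ẽ` by zero:
      (∀ f : ℂ → ℤ, (∀ α, f α = if α ∈ A₁ then etil α else 0) →
        (∏ α ∈ R, α ^ f α = (q : ℂ) ^ s) ∧ 1 ≤ s ∧
        (∀ α ∈ R, 0 ≤ f α) ∧
        (∀ α ∈ R, α ^ 2 ≠ (q : ℂ) → f α = 0 ∨ f ((q : ℂ) / α) = 0) ∧
        (∀ β ∈ R, β ^ 2 = (q : ℂ) → f β = 0 ∨ f β = 1) ∧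
        (∑ α ∈ R, |f α|) = 2 * s ∧ 2 * s ≤ 2 * w ∧
        (∀ β ∈ R, β ^ 2 = (q : ℂ) → f β = 0)) := by
  obtain ⟨e, ⟨d, hprod⟩, hnontriv, hwt⟩ := hex
  have hq0 : (q : ℂ) ≠ 0 := by exact_mod_cast (by omega : q ≠ 0)
  have hnorm : ‖(q : ℂ)‖ = q := by
    rw [Complex.norm_intCast, abs_of_pos (by exact_mod_cast (by omega : 0 < q))]
  have hsum : ∑ α ∈ R, e α = 2 * d :=
    sum_eq_two_mul_of_prod_zpow_eq (by rw [hnorm]; exact_mod_cast hq)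
      (fun α hα => by rw [hnorm, habs α hα]) hprod
  set E := skewPart (q : ℂ) e
  have hanti : ∀ α ∈ R, E (q / α) = -E α := fun α _ => skewPart_div hq0 e α
  obtain ⟨α₀, hα₀R, hα₀⟩ := exists_skewPart_pos (by simp) hq0 hR0 hconj hprod hsum hnontriv
  set A := R.filter (0 < E ·)
  have hspos : 0 < ∑ α ∈ A, E α :=
    sum_pos (fun α hα => (mem_filter.1 hα).2) ⟨α₀, mem_filter.2 ⟨hα₀R, hα₀⟩⟩
  have hsw : ∑ α ∈ A, E α ≤ w := by
    have : ∑ α ∈ R, |E α| ≤ 2 * ∑ α ∈ R, |e α| := sum_abs_skewPart_le hq0 hconj e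
    have : ∑ α ∈ R, |E α| = 2 * ∑ α ∈ A, E α := sum_abs_eq_two_mul_sum_filter_pos hq0 hconj hanti
    omega
  have hE : ∏ α ∈ R, α ^ E α = 1 := prod_zpow_skewPart_eq_one hq0 hR0 hconj hprod hsum
  refine ⟨A, fun α => 2 * E α, _, filter_subset _ _, ⟨α₀, mem_filter.2 ⟨hα₀R, hα₀⟩⟩, hspos, hsw,
    fun α hα => ⟨div_notMem_filter_pos hanti hα, by simpa using (mem_filter.1 hα).2⟩,
    prod_filter_pos_zpow_two_mul hq0 hR0 hconj hanti hE, fun f hf => ?_⟩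
  obtain ⟨hfprod, hf0, hfdiv, hfsq, hfwt⟩ := eq_ite_filter_pos_spec hq0 hR0 hconj hanti hE hf
  exact ⟨hfprod, hspos, fun α _ => hf0 α, fun α _ _ => hfdiv α,
    fun β hβ hβq => .inl (hfsq β hβ hβq), hfwt, by omega, hfsq⟩

/-- Assume `R` is not small and there exists a nontrivial admissible function
of weight at most `w`. Then there exist a nonempty `A₁ ⊆ R`, a function `ẽ : A₁ → ℤ`, and a
positive integer `s ≤ w` such that: (1) for every `α ∈ A₁`, `q/α ∉ A₁` and `ẽ α > 0`;
(2) `∏_{α∈A₁} α^{ẽ α} = q^s`. In particular, the extension-by-zero `f` of `ẽ` to `R` is a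
reduced admissible function of weight `2s ≤ 2w` vanishing identically on `R^ι`. -/
theorem stmt_9 (q : ℤ) (hq : 2 ≤ q) (R : Finset ℂ) (hRne : R.Nonempty)
    (hR0 : ∀ α ∈ R, α ≠ 0)
    (habs : ∀ α ∈ R, ‖α‖ ^ 2 = (q : ℝ))
    (hconj : ∀ α ∈ R, (q : ℂ) / α ∈ R)
    (hnotsmall : ∀ α₁ ∈ R, ∀ α₂ ∈ R, α₁ ≠ α₂ → ∀ n : ℕ, 0 < n → (α₁ / α₂) ^ n ≠ 1)
    (w : ℤ) (hw : 0 < w)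
    (hex : ∃ e : ℂ → ℤ,
      (∃ d : ℤ, ∏ α ∈ R, α ^ e α = (q : ℂ) ^ d) ∧
      (¬ ((∀ α ∈ R, e α = e ((q : ℂ) / α)) ∧
        ∀ β ∈ R, β ^ 2 = (q : ℂ) → Even (e β))) ∧
      (∑ α ∈ R, |e α|) ≤ w) :
    ∃ (A₁ : Finset ℂ) (etil : ℂ → ℤ) (s : ℤ),
      A₁ ⊆ R ∧ A₁.Nonempty ∧ 0 < s ∧ s ≤ w ∧
      (∀ α ∈ A₁, (q : ℂ) / α ∉ A₁ ∧ 0 < etil α) ∧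
      (∏ α ∈ A₁, α ^ etil α = (q : ℂ) ^ s) ∧
      -- the "in particular" part, for `f` the extension of `ẽ` by zero:
      (∀ f : ℂ → ℤ, (∀ α, f α = if α ∈ A₁ then etil α else 0) →
        (∏ α ∈ R, α ^ f α = (q : ℂ) ^ s) ∧ 1 ≤ s ∧
        (∀ α ∈ R, 0 ≤ f α) ∧
        (∀ α ∈ R, α ^ 2 ≠ (q : ℂ) → f α = 0 ∨ f ((q : ℂ) / α) = 0) ∧
        (∀ β ∈ R, β ^ 2 = (q : ℂ) → f β = 0 ∨ f β = 1) ∧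
        (∑ α ∈ R, |f α|) = 2 * s ∧ 2 * s ≤ 2 * w ∧
        (∀ β ∈ R, β ^ 2 = (q : ℂ) → f β = 0)) :=
  stmt_9_general q hq R hR0 habs hconj w hex
end

section
/- Let m and s be positive integers and let v₁, …, v_s be elements of ℚ^m. Then the set W = {u ∈ ℤ^m : every coordinate of u is nonnegative and u·v_j = 0 for all j = 1, …, s} is a finitely generated additive submonoid of ℤ^m. -/
/-!
Nonnegative integer vectors are the image of `ℕ^m`, and there `W` is the kernel of the additive
map `x ↦ (x · v_j)_j` into `ℚ^s`. A kernel is subtractive (`x, x + y ∈ W → y ∈ W`), and by Dickson's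
lemma a subtractive submonoid of `ℕ^m` is generated by its finitely many minimal nonzero elements.
-/

open Finset

theorem AddMonoidHom.mker_fg {M N : Type*} [AddCommMonoid M] [PartialOrder M]
    [WellQuasiOrderedLE M] [IsOrderedCancelAddMonoid M] [CanonicallyOrderedAdd M]
    [AddZeroClass N] (f : M →+ N) : (AddMonoidHom.mker f).FG :=
  AddSubmonoid.fg_of_subtractive fun x hx y hxy => by
    rw [AddMonoidHom.mem_mker] at hx hxy ⊢
    rwa [map_add, hx, zero_add] at hxy

def ratDotProductsHom {ι κ : Type*} [Fintype ι] (v : κ → ι → ℚ) : (ι → ℤ) →+ (κ → ℚ) where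
  toFun u j := ∑ i, (u i : ℚ) * v j i
  map_zero' := by ext; simp
  map_add' u w := by ext; simp [add_mul, sum_add_distrib]

theorem range_compLeft_natCast (ι : Type*) :
    Set.range (AddMonoidHom.compLeft (Nat.castAddMonoidHom ℤ) ι) = {u | ∀ i, 0 ≤ u i} := by
  ext u
  refine ⟨?_, fun hu => ?_⟩
  · rintro ⟨x, rfl⟩ i
    simp
  · lift u to ι → ℕ using hu
    exact ⟨u, rfl⟩

theorem stmt_12_general (m s : ℕ) (v : Fin s → Fin m → ℚ) :
    ∃ S : Finset (Fin m → ℤ),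
      (S : Set (Fin m → ℤ)) ⊆
        {u : Fin m → ℤ | (∀ i, 0 ≤ u i) ∧ ∀ j, (∑ i, (u i : ℚ) * v j i) = 0} ∧
      {u : Fin m → ℤ | (∀ i, 0 ≤ u i) ∧ ∀ j, (∑ i, (u i : ℚ) * v j i) = 0} =
        ↑(AddSubmonoid.closure (S : Set (Fin m → ℤ))) := by
  set c := AddMonoidHom.compLeft (Nat.castAddMonoidHom ℤ) (Fin m)
  have hW : {u : Fin m → ℤ | (∀ i, 0 ≤ u i) ∧ ∀ j, (∑ i, (u i : ℚ) * v j i) = 0} =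
      (AddMonoidHom.mker ((ratDotProductsHom v).comp c)).map c := by
    rw [← AddMonoidHom.comap_mker, AddSubmonoid.coe_map, AddSubmonoid.coe_comap,
      Set.image_preimage_eq_range_inter, range_compLeft_natCast]
    ext u
    simp [AddMonoidHom.mem_mker, ratDotProductsHom, funext_iff]
  obtain ⟨S, hS⟩ := (AddMonoidHom.mker_fg ((ratDotProductsHom v).comp c)).map c
  refine ⟨S, ?_, by rw [hW, hS]⟩
  rw [hW, ← hS]
  exact AddSubmonoid.subset_closure

/-- **variant of Gordan's lemma.** For `v₁, …, v_s ∈ ℚ^m`, the set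
`W = {u ∈ ℤ^m | u ≥ 0 and u · v_j = 0 for all j}` is a finitely generated additive
submonoid of `ℤ^m`: there is a finite `S ⊆ W` with `W = closure S`. -/
theorem stmt_12 (m s : ℕ) (hm : 0 < m) (hs : 0 < s) (v : Fin s → Fin m → ℚ) :
    ∃ S : Finset (Fin m → ℤ),
      (S : Set (Fin m → ℤ)) ⊆
        {u : Fin m → ℤ | (∀ i, 0 ≤ u i) ∧ ∀ j, (∑ i, (u i : ℚ) * v j i) = 0} ∧
      {u : Fin m → ℤ | (∀ i, 0 ≤ u i) ∧ ∀ j, (∑ i, (u i : ℚ) * v j i) = 0} =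
        ↑(AddSubmonoid.closure (S : Set (Fin m → ℤ))) :=
  stmt_12_general m s v
end
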